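/- arXiv:0807.4904 — 6 statements merged into one kernel-verified Lean document; each statement's English description precedes it below -/
import Mathlib

section
/- Let f : ℕ → (0,∞) be any function. Define μ_k = (1/(1+f(k))) * ∏_{l=0}^{k-1} f(l)/(1+f(l)) for k ∈ ℕ. If f(k) ≤ k+1 for all k, then ∑_{k=0}^∞ μ_k = 1, i.e. (μ_k) is a sequence of probability weights. -/
/-!
With `a l = f l / (1 + f l)` we have `1 / (1 + f k) = 1 - a k`, so the weights telescope:
`∑_{k<n} μ_k = 1 - ∏_{l<n} a l`. Since `x ↦ x / (1 + x)` is increasing and `f l ≤ l + 1`,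
`∏_{l<n} a l ≤ ∏_{l<n} (l + 1) / (l + 2) = 1 / (n + 1) → 0`.
-/

open Finset Filter Topology

theorem sum_range_one_sub_mul_prod {R : Type*} [CommRing R] (a : ℕ → R) (n : ℕ) :
    ∑ k ∈ range n, (1 - a k) * ∏ l ∈ range k, a l = 1 - ∏ l ∈ range n, a l := by
  have hstep : ∀ k, (1 - a k) * ∏ l ∈ range k, a l
      = ∏ l ∈ range k, a l - ∏ l ∈ range (k + 1), a l := fun k => by
    rw [prod_range_succ]; ring
  simp only [hstep, sum_range_sub', range_zero, prod_empty]

theorem hasSum_one_sub_mul_prod_of_tendsto_zero {a : ℕ → ℝ} (h0 : ∀ k, 0 ≤ a k)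
    (h1 : ∀ k, a k ≤ 1) (hlim : Tendsto (fun n => ∏ l ∈ range n, a l) atTop (𝓝 0)) :
    HasSum (fun k => (1 - a k) * ∏ l ∈ range k, a l) 1 := by
  rw [hasSum_iff_tendsto_nat_of_nonneg fun k =>
    mul_nonneg (sub_nonneg.2 (h1 k)) (prod_nonneg fun l _ => h0 l)]
  simp only [sum_range_one_sub_mul_prod]
  simpa using hlim.const_sub (1 : ℝ)

theorem div_one_add_le_div_one_add {x y : ℝ} (hx : 0 ≤ x) (hxy : x ≤ y) :
    x / (1 + x) ≤ y / (1 + y) := by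
  rw [div_le_div_iff₀ (by linarith) (by linarith)]
  linarith

theorem prod_range_div_one_add_le {f : ℕ → ℝ} (hpos : ∀ k, 0 ≤ f k)
    (hle : ∀ k : ℕ, f k ≤ k + 1) (n : ℕ) :
    ∏ l ∈ range n, f l / (1 + f l) ≤ 1 / (n + 1) := by
  induction n with
  | zero => simp
  | succ n ih =>
    have hfn : f n / (1 + f n) ≤ (n + 1) / (n + 2) := by
      have := div_one_add_le_div_one_add (hpos n) (hle n)
      rwa [show (1 : ℝ) + (n + 1) = n + 2 by ring] at this
    calc ∏ l ∈ range (n + 1), f l / (1 + f l)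
        = (∏ l ∈ range n, f l / (1 + f l)) * (f n / (1 + f n)) := prod_range_succ _ _
      _ ≤ 1 / (n + 1) * ((n + 1) / (n + 2)) :=
          mul_le_mul ih hfn (div_nonneg (hpos n) (by linarith [hpos n])) (by positivity)
      _ = 1 / ((n + 1 : ℕ) + 1) := by push_cast; field_simp; ring

/-- The limiting degree distribution weights sum to one. -/
theorem stmt0 (f : ℕ → ℝ) (hpos : ∀ k, 0 < f k) (hle : ∀ k : ℕ, f k ≤ k + 1) :
    HasSum (fun k => (1 / (1 + f k)) * ∏ l ∈ Finset.range k, f l / (1 + f l)) 1 := by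
  have hnonneg : ∀ k, 0 ≤ f k := fun k => (hpos k).le
  have hden : ∀ k, 0 < 1 + f k := fun k => by linarith [hpos k]
  have hratio_nonneg : ∀ k, 0 ≤ f k / (1 + f k) := fun k => div_nonneg (hnonneg k) (hden k).le
  have hweight : ∀ k, 1 / (1 + f k) = 1 - f k / (1 + f k) := fun k => by
    field_simp [(hden k).ne']; ring
  simp only [hweight]
  refine hasSum_one_sub_mul_prod_of_tendsto_zero hratio_nonneg
    (fun k => (div_le_one (hden k)).2 (by linarith)) ?_
  exact squeeze_zero (fun n => prod_nonneg fun l _ => hratio_nonneg l)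
    (prod_range_div_one_add_le hnonneg hle) tendsto_one_div_add_atTop_nhds_zero_nat
end

section
/- Suppose f(k) ∼ γ·k^α as k → ∞, for 0 < α < 1 and γ > 0, and let μ_k = (1/(1+f(k))) ∏_{l=0}^{k-1} f(l)/(1+f(l)). Then log μ_k ∼ -(1/γ)·(1/(1-α))·k^{1-α} as k → ∞, i.e. the asymptotic degree distribution has stretched exponential tails. -/
/-!
Taking logarithms, `-log μ_k = ∑_{l<k} log (1 + 1/f(l)) + log (1 + f(k))`. Since `f(l) → ∞`,
`log (1 + 1/f(l)) ∼ 1/f(l) ∼ γ⁻¹ l^(-α)`, which is in turn equivalent to the telescoping increment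
`((l+1)^(1-α) - l^(1-α)) / (γ (1-α))`; as the series diverges, equivalence passes to the partial
sums, which telescope to `k^(1-α) / (γ (1-α))`. The last term is `O(log k)`, hence negligible.
-/

open Filter Asymptotics Finset Topology

section
variable {ι : Type*} {l : Filter ι}

theorem HasDerivAt.isEquivalent_comp_add {g : ℝ → ℝ} {g' x : ℝ} (hg : HasDerivAt g g' x)
    (hg' : g' ≠ 0) {u : ι → ℝ} (hu : Tendsto u l (𝓝 0)) :
    (fun n => g (x + u n) - g x) ~[l] fun n => g' * u n := by
  have h := (hasDerivAt_iff_isLittleO_nhds_zero.1 hg).comp_tendsto hu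
  refine IsLittleO.isEquivalent ((h.trans_isBigO (isBigO_self_const_mul hg' u l)).congr_left
    fun n => ?_)
  simp [mul_comm]

theorem Real.isEquivalent_log_one_add {u : ι → ℝ} (hu : Tendsto u l (𝓝 0)) :
    (fun n => Real.log (1 + u n)) ~[l] u := by
  simpa using (Real.hasDerivAt_log one_ne_zero).isEquivalent_comp_add (by norm_num) hu

theorem Real.isEquivalent_one_add_rpow_sub_one {p : ℝ} (hp : p ≠ 0) {u : ι → ℝ}
    (hu : Tendsto u l (𝓝 0)) :
    (fun n => (1 + u n) ^ p - 1) ~[l] fun n => p * u n := by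
  simpa using (Real.hasDerivAt_rpow_const (x := 1) (p := p) (Or.inl one_ne_zero))
    |>.isEquivalent_comp_add (by simpa using hp) hu

end

theorem Real.isEquivalent_rpow_add_one_sub_rpow {p : ℝ} (hp : p ≠ 0) :
    (fun x : ℝ => (x + 1) ^ p - x ^ p) ~[atTop] fun x => p * x ^ (p - 1) := by
  have h := (Real.isEquivalent_one_add_rpow_sub_one hp tendsto_inv_atTop_zero).mul
    (IsEquivalent.refl (u := fun x : ℝ => x ^ p))
  refine (h.congr_left ?_).congr_right ?_
  · filter_upwards [eventually_gt_atTop 0] with x hx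
    rw [Pi.mul_apply, sub_mul, one_mul, ← Real.mul_rpow (by positivity) hx.le,
      add_mul, inv_mul_cancel₀ hx.ne', one_mul, add_comm]
  · filter_upwards [eventually_gt_atTop 0] with x hx
    rw [Pi.mul_apply, Real.rpow_sub_one hx.ne']
    ring

theorem Asymptotics.IsEquivalent.sum_range {u v : ℕ → ℝ} (h : u ~[atTop] v) (hv : ∀ n, 0 ≤ v n)
    (hsum : Tendsto (fun n => ∑ i ∈ range n, v i) atTop atTop) :
    (fun n => ∑ i ∈ range n, u i) ~[atTop] fun n => ∑ i ∈ range n, v i := by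
  refine IsLittleO.isEquivalent ((h.isLittleO.sum_range hv hsum).congr_left fun n => ?_)
  simp [sum_sub_distrib]

theorem Real.sum_range_rpow_add_one_sub_rpow {p : ℝ} (hp : p ≠ 0) (n : ℕ) :
    ∑ i ∈ range n, (((i : ℝ) + 1) ^ p - (i : ℝ) ^ p) = (n : ℝ) ^ p := by
  simpa [Real.zero_rpow hp] using sum_range_sub (fun i : ℕ => (i : ℝ) ^ p) n

theorem Real.isLittleO_log_const_mul_rpow_atTop {γ α p : ℝ} (hγ : 0 < γ) (hp : 0 < p) :
    (fun x : ℝ => Real.log (γ * x ^ α)) =o[atTop] fun x => x ^ p := by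
  have hconst : (fun _ : ℝ => Real.log γ) =o[atTop] fun x => x ^ p :=
    isLittleO_const_left.2 <| Or.inr <| tendsto_norm_atTop_atTop.comp (tendsto_rpow_atTop hp)
  refine (hconst.add ((isLittleO_log_rpow_atTop hp).const_mul_left α)).congr' ?_ .rfl
  filter_upwards [eventually_gt_atTop 0] with x hx
  rw [Real.log_mul hγ.ne' (by positivity), Real.log_rpow hx]

section StretchedExponential

variable {f : ℕ → ℝ} {γ α : ℝ}

theorem tendsto_const_mul_natCast_rpow_atTop (hγ : 0 < γ) (hα : 0 < α) :
    Tendsto (fun k : ℕ => γ * (k : ℝ) ^ α) atTop atTop :=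
  ((tendsto_rpow_atTop hα).comp tendsto_natCast_atTop_atTop).const_mul_atTop hγ

theorem isEquivalent_sum_log_one_add_inv (hγ : 0 < γ) (hα0 : 0 < α) (hα1 : α < 1)
    (hf : f ~[atTop] fun k : ℕ => γ * (k : ℝ) ^ α) :
    (fun k => ∑ l ∈ range k, Real.log (1 + (f l)⁻¹)) ~[atTop]
      fun k => (γ * (1 - α))⁻¹ * (k : ℝ) ^ (1 - α) := by
  set p := 1 - α
  have hp : 0 < p := sub_pos.2 hα1
  set d : ℕ → ℝ := fun l => (γ * p)⁻¹ * (((l : ℝ) + 1) ^ p - (l : ℝ) ^ p)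
  have hsum_d (k : ℕ) : ∑ l ∈ range k, d l = (γ * p)⁻¹ * (k : ℝ) ^ p := by
    rw [← mul_sum, Real.sum_range_rpow_add_one_sub_rpow hp.ne']
  have hd_nonneg (l : ℕ) : 0 ≤ d l :=
    mul_nonneg (by positivity)
      (sub_nonneg.2 (Real.rpow_le_rpow (by positivity) (by linarith) hp.le))
  have hf_top := hf.symm.tendsto_atTop (tendsto_const_mul_natCast_rpow_atTop hγ hα0)
  -- `1 / (γ l^α)` is the derivative of `l ↦ l^p / (γ p)`, hence equivalent to its increments `d l`
  have hinv_d : (fun l => (f l)⁻¹) ~[atTop] d := by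
    refine hf.inv.trans (Filter.EventuallyEq.trans_isEquivalent ?_
      (IsEquivalent.refl.mul ((Real.isEquivalent_rpow_add_one_sub_rpow hp.ne').comp_tendsto
        tendsto_natCast_atTop_atTop).symm))
    filter_upwards [eventually_gt_atTop 0] with l hl
    have hl' : (0 : ℝ) < l := Nat.cast_pos.2 hl
    simp only [Pi.mul_apply, Pi.inv_apply, Function.comp_apply]
    rw [show p - 1 = -α by ring, Real.rpow_neg hl'.le]
    field_simp
  have hterm := (Real.isEquivalent_log_one_add (tendsto_inv_atTop_zero.comp hf_top)).trans hinv_d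
  refine (hterm.sum_range hd_nonneg ?_).congr_right (.of_eq (funext hsum_d))
  simp only [hsum_d]
  exact ((tendsto_rpow_atTop hp).comp tendsto_natCast_atTop_atTop).const_mul_atTop (by positivity)

theorem isLittleO_log_one_add_of_isEquivalent (hγ : 0 < γ) (hα : 0 < α) {p : ℝ} (hp : 0 < p)
    (hf : f ~[atTop] fun k : ℕ => γ * (k : ℝ) ^ α) :
    (fun k => Real.log (1 + f k)) =o[atTop] fun k : ℕ => (k : ℝ) ^ p := by
  have hw := tendsto_const_mul_natCast_rpow_atTop hγ hα
  have hone : (fun _ : ℕ => (1 : ℝ)) =o[atTop] fun k : ℕ => γ * (k : ℝ) ^ α :=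
    (isLittleO_one_left_iff ℝ).2 (tendsto_norm_atTop_atTop.comp hw)
  exact ((hone.add_isEquivalent hf).log hw).isBigO.trans_isLittleO
    ((Real.isLittleO_log_const_mul_rpow_atTop hγ hp).comp_tendsto tendsto_natCast_atTop_atTop)

end StretchedExponential

noncomputable def degreeDist (f : ℕ → ℝ) (k : ℕ) : ℝ :=
  (1 / (1 + f k)) * ∏ l ∈ range k, f l / (1 + f l)

theorem log_degreeDist {f : ℕ → ℝ} (hf : ∀ k, 0 < f k) (k : ℕ) :
    Real.log (degreeDist f k) =
      -(∑ l ∈ range k, Real.log (1 + (f l)⁻¹) + Real.log (1 + f k)) := by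
  have hfactor (l : ℕ) : f l / (1 + f l) = (1 + (f l)⁻¹)⁻¹ := by
    have := hf l
    field_simp
    ring
  have hne (l : ℕ) : 1 + (f l)⁻¹ ≠ 0 := by have := hf l; positivity
  rw [degreeDist, Real.log_mul (by have := hf k; positivity)
    (prod_ne_zero_iff.2 fun l _ => by rw [hfactor]; exact inv_ne_zero (hne l)),
    Real.log_prod fun l _ => by rw [hfactor]; exact inv_ne_zero (hne l)]
  simp only [hfactor, Real.log_inv, one_div, sum_neg_distrib]
  ring

/-- Stretched exponential tails of the limiting degree distribution for
`f(k) ∼ γ k^α`, `0 < α < 1`. -/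
theorem stmt2 (f : ℕ → ℝ) (hpos : ∀ k, 0 < f k) (γ α : ℝ) (hγ : 0 < γ)
    (hα0 : 0 < α) (hα1 : α < 1)
    (hf : Filter.Tendsto (fun k : ℕ => f k / (γ * (k : ℝ) ^ α)) Filter.atTop (nhds 1))
    (μ : ℕ → ℝ)
    (hμ : ∀ k, μ k = (1 / (1 + f k)) * ∏ l ∈ Finset.range k, f l / (1 + f l)) :
    Filter.Tendsto
      (fun k : ℕ => Real.log (μ k) / (-(1 / γ) * (1 / (1 - α)) * (k : ℝ) ^ (1 - α)))
      Filter.atTop (nhds 1) := by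
  have hfw : f ~[atTop] fun k : ℕ => γ * (k : ℝ) ^ α := isEquivalent_of_tendsto_one hf
  have hp : 0 < 1 - α := sub_pos.2 hα1
  have hneg_log :
      (fun k => -Real.log (μ k)) ~[atTop] fun k => (γ * (1 - α))⁻¹ * (k : ℝ) ^ (1 - α) := by
    refine ((isEquivalent_sum_log_one_add_inv hγ hα0 hα1 hfw).add_isLittleO
      ((isLittleO_log_one_add_of_isEquivalent hγ hα0 hp hfw).const_mul_right
        (by positivity))).congr_left (.of_eq (funext fun k => ?_))
    rw [hμ k, ← degreeDist, log_degreeDist hpos, neg_neg, Pi.add_apply]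
  have hratio := (isEquivalent_iff_tendsto_one ?_).1 hneg_log.neg
  · refine hratio.congr fun k => ?_
    simp only [Pi.div_apply, neg_neg]
    rw [mul_inv]
    ring
  · filter_upwards [eventually_gt_atTop 0] with k hk
    have : (0 : ℝ) < k := Nat.cast_pos.2 hk
    exact neg_ne_zero.2 (by positivity)
end

section
/- Let (t_i)_{i≥0} be a strictly increasing sequence of nonnegative reals with t_0 = 0 and t_i → ∞, and let λ > 0 satisfy λ·(t_i - t_{i-1}) ≤ 1 for all i ≥ 1. Let X be a discrete random variable with P(X = t_i) = λ·Δt_i · ∏_{j=1}^{i-1} (1 - λ·Δt_j), where Δt_i = t_i - t_{i-1}. Then E[X] = 1/λ and Var(X) ≤ 1/λ². -/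
/-!
With `Q n = ∏_{k<n} (1 - λ Δt_{k+1})` the law of `X` gives `P(X = t_{k+1}) = Q k - Q (k+1)`, and
`Q n ≤ exp (-λ t_n)` tends to `0`, so these masses sum to `1` and `X` is concentrated on
`{t_1, t_2, …}`. Summation by parts against `Q`, using `Q k - Q (k+1) = λ Δt_{k+1} Q k`, turns
`∑ t_{k+1} P(X = t_{k+1})` into `∑ Δt_{k+1} Q k = (1 - lim Q) / λ = 1 / λ`, and
`∑ t_{k+1}² P(X = t_{k+1})` into `∑ (t_{k+1} + t_k) Δt_{k+1} Q k ≤ (2 / λ) E[X] = 2 / λ²`;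
hence `Var X ≤ 2 / λ² - 1 / λ²`.
-/

open MeasureTheory Filter Finset Function Topology

namespace MeasureTheory.Measure

variable {α ι : Type*} [MeasurableSpace α] [MeasurableSingletonClass α] [Countable ι]
  {ν : Measure α} {x : ι → α}

theorem measure_range_eq_tsum_singleton (hx : Injective x) :
    ν (Set.range x) = ∑' i, ν {x i} := by
  rw [← Set.iUnion_singleton_eq_range,
    measure_iUnion (fun i j hij => Set.disjoint_singleton.2 (hx.ne hij))
      fun _ => measurableSet_singleton _]

theorem ae_mem_range_of_tsum_singleton [IsProbabilityMeasure ν] (hx : Injective x)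
    (h : ∑' i, ν {x i} = 1) : ∀ᵐ a ∂ν, a ∈ Set.range x := by
  rw [← measure_range_eq_tsum_singleton hx] at h
  exact (mem_ae_iff_prob_eq_one (Set.countable_range x).measurableSet).2 h

theorem eq_sum_smul_dirac_of_ae_mem_range (hx : Injective x) (h : ∀ᵐ a ∂ν, a ∈ Set.range x) :
    ν = sum fun i => ν {x i} • dirac (x i) := by
  calc ν = ν.restrict (⋃ i, {x i}) := by
        rw [Set.iUnion_singleton_eq_range, restrict_eq_self_of_ae_mem h]
    _ = sum fun i => ν {x i} • dirac (x i) := by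
        simp only [restrict_iUnion (fun i j hij => Set.disjoint_singleton.2 (hx.ne hij))
          fun _ => measurableSet_singleton _, restrict_singleton]

end MeasureTheory.Measure

section DiscreteDistribution

variable {Ω α ι E : Type*} [MeasurableSpace Ω] [MeasurableSpace α] [MeasurableSingletonClass α]
  [Countable ι] [NormedAddCommGroup E]
  {μ : Measure Ω} {X : Ω → α} {x : ι → α} {p : ι → ℝ}

theorem map_eq_sum_smul_dirac_of_hasSum [IsProbabilityMeasure μ] (hX : Measurable X)
    (hx : Injective x) (hp : ∀ i, 0 ≤ p i) (hp1 : HasSum p 1)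
    (hmass : ∀ i, μ (X ⁻¹' {x i}) = ENNReal.ofReal (p i)) :
    μ.map X = Measure.sum fun i => ENNReal.ofReal (p i) • Measure.dirac (x i) := by
  have hsingleton (i : ι) : μ.map X {x i} = ENNReal.ofReal (p i) := by
    rw [Measure.map_apply hX (measurableSet_singleton _), hmass]
  have : IsProbabilityMeasure (μ.map X) := Measure.isProbabilityMeasure_map hX.aemeasurable
  have hae : ∀ᵐ a ∂μ.map X, a ∈ Set.range x := by
    refine Measure.ae_mem_range_of_tsum_singleton hx ?_
    simp_rw [hsingleton]
    rw [← ENNReal.ofReal_tsum_of_nonneg hp hp1.summable, hp1.tsum_eq, ENNReal.ofReal_one]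
  conv_lhs => rw [Measure.eq_sum_smul_dirac_of_ae_mem_range hx hae]
  simp_rw [hsingleton]

theorem integrable_comp_of_summable (hX : Measurable X) (hp : ∀ i, 0 ≤ p i)
    (hmap : μ.map X = Measure.sum fun i => ENNReal.ofReal (p i) • Measure.dirac (x i))
    {f : α → E} (hf : StronglyMeasurable f) (hfs : Summable fun i => p i * ‖f (x i)‖) :
    Integrable (fun ω => f (X ω)) μ := by
  refine (integrable_map_measure hf.aestronglyMeasurable hX.aemeasurable).1 ?_
  rw [hmap]
  refine integrable_sum_dirac (fun _ => ENNReal.ofReal_ne_top) ?_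
  simpa only [ENNReal.toReal_ofReal (hp _)] using hfs

theorem integral_comp_eq_tsum [NormedSpace ℝ E] [CompleteSpace E] (hX : Measurable X)
    (hp : ∀ i, 0 ≤ p i)
    (hmap : μ.map X = Measure.sum fun i => ENNReal.ofReal (p i) • Measure.dirac (x i))
    {f : α → E} (hf : StronglyMeasurable f) (hfs : Summable fun i => p i * ‖f (x i)‖) :
    ∫ ω, f (X ω) ∂μ = ∑' i, p i • f (x i) := by
  rw [← integral_map hX.aemeasurable hf.aestronglyMeasurable, hmap,
    integral_sum_dirac_eq_tsum (fun _ => ENNReal.ofReal_ne_top)]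
  · simp only [ENNReal.toReal_ofReal (hp _)]
  · simpa only [ENNReal.toReal_ofReal (hp _)] using hfs

end DiscreteDistribution

namespace DiscretizedExponential

variable (l : ℝ) (t : ℕ → ℝ)

/- `survival l t n = P(X > t_n)` and `mass l t k = P(X = t_{k+1})`: the paper's index `i ≥ 1`
is `k + 1` here. -/
def survival (n : ℕ) : ℝ := ∏ k ∈ range n, (1 - l * (t (k + 1) - t k))

def mass (k : ℕ) : ℝ := l * (t (k + 1) - t k) * survival l t k

@[simp]
theorem survival_zero : survival l t 0 = 1 := prod_range_zero _

theorem survival_succ (n : ℕ) :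
    survival l t (n + 1) = survival l t n * (1 - l * (t (n + 1) - t n)) :=
  prod_range_succ _ n

theorem mass_eq_survival_sub (k : ℕ) : mass l t k = survival l t k - survival l t (k + 1) := by
  rw [mass, survival_succ]
  ring

theorem sum_range_mass (N : ℕ) : ∑ k ∈ range N, mass l t k = 1 - survival l t N := by
  simp only [mass_eq_survival_sub, sum_range_sub', survival_zero]

variable {l t}

theorem prod_Icc_eq_survival (k : ℕ) :
    ∏ j ∈ Icc 1 k, (1 - l * (t j - t (j - 1))) = survival l t k := by
  rw [← Ico_add_one_right_eq_Icc, prod_Ico_eq_prod_range]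
  simp [survival, add_comm]

theorem survival_nonneg (hstep : ∀ k, l * (t (k + 1) - t k) ≤ 1) (n : ℕ) :
    0 ≤ survival l t n :=
  prod_nonneg fun k _ => sub_nonneg.2 (hstep k)

theorem mass_nonneg (hl : 0 ≤ l) (hmono : Monotone t) (hstep : ∀ k, l * (t (k + 1) - t k) ≤ 1)
    (k : ℕ) : 0 ≤ mass l t k :=
  mul_nonneg (mul_nonneg hl (sub_nonneg.2 (hmono k.le_succ))) (survival_nonneg hstep k)

theorem survival_le_exp (hstep : ∀ k, l * (t (k + 1) - t k) ≤ 1) (n : ℕ) :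
    survival l t n ≤ Real.exp (-(l * (t n - t 0))) := by
  calc survival l t n ≤ ∏ k ∈ range n, Real.exp (-(l * (t (k + 1) - t k))) :=
        prod_le_prod (fun k _ => sub_nonneg.2 (hstep k)) fun k _ => by
          linarith [Real.add_one_le_exp (-(l * (t (k + 1) - t k)))]
    _ = Real.exp (-(l * (t n - t 0))) := by
        rw [← Real.exp_sum, sum_neg_distrib, ← mul_sum, sum_range_sub]

theorem tendsto_survival (hl : 0 < l) (htop : Tendsto t atTop atTop)
    (hstep : ∀ k, l * (t (k + 1) - t k) ≤ 1) : Tendsto (survival l t) atTop (𝓝 0) := by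
  refine squeeze_zero (survival_nonneg hstep) (survival_le_exp hstep) ?_
  refine Real.tendsto_exp_atBot.comp (tendsto_neg_atTop_atBot.comp ?_)
  exact (tendsto_atTop_add_const_right _ _ htop).const_mul_atTop hl

theorem hasSum_mass (hl : 0 < l) (hmono : Monotone t) (htop : Tendsto t atTop atTop)
    (hstep : ∀ k, l * (t (k + 1) - t k) ≤ 1) : HasSum (mass l t) 1 := by
  rw [hasSum_iff_tendsto_nat_of_nonneg (mass_nonneg hl.le hmono hstep)]
  simp_rw [sum_range_mass]
  simpa using tendsto_const_nhds.sub (tendsto_survival hl htop hstep)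

theorem tendsto_mul_survival (hl : 0 < l) (ht0 : t 0 = 0) (hmono : Monotone t)
    (htop : Tendsto t atTop atTop) (hstep : ∀ k, l * (t (k + 1) - t k) ≤ 1) :
    Tendsto (fun n => t n * survival l t n) atTop (𝓝 0) := by
  have ht (n : ℕ) : 0 ≤ t n := ht0 ▸ hmono n.zero_le
  have hexp : Tendsto (fun x : ℝ => x * Real.exp (-(l * x))) atTop (𝓝 0) := by
    simpa [Real.rpow_one, neg_mul] using tendsto_rpow_mul_exp_neg_mul_atTop_nhds_zero 1 l hl
  refine squeeze_zero (fun n => mul_nonneg (ht n) (survival_nonneg hstep n)) (fun n => ?_)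
    (hexp.comp htop)
  simpa [ht0] using mul_le_mul_of_nonneg_left (survival_le_exp hstep n) (ht n)

theorem sum_range_mul_mass (hl : l ≠ 0) (N : ℕ) :
    ∑ k ∈ range N, mass l t k * t (k + 1) =
      (1 - survival l t N) / l + (t 0 - t N * survival l t N) := by
  have hterm (k : ℕ) : mass l t k * t (k + 1) =
      mass l t k / l + (t k * survival l t k - t (k + 1) * survival l t (k + 1)) := by
    simp only [mass, survival_succ]
    field_simp
    ring
  rw [sum_congr rfl fun k _ => hterm k, sum_add_distrib, ← sum_div, sum_range_mass,
    sum_range_sub' (fun k => t k * survival l t k), survival_zero, mul_one]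

theorem hasSum_mul_mass (hl : 0 < l) (ht0 : t 0 = 0) (hmono : Monotone t)
    (htop : Tendsto t atTop atTop) (hstep : ∀ k, l * (t (k + 1) - t k) ≤ 1) :
    HasSum (fun k => mass l t k * t (k + 1)) (1 / l) := by
  have ht (n : ℕ) : 0 ≤ t n := ht0 ▸ hmono n.zero_le
  rw [hasSum_iff_tendsto_nat_of_nonneg fun k =>
    mul_nonneg (mass_nonneg hl.le hmono hstep k) (ht _)]
  simp_rw [sum_range_mul_mass hl.ne', ht0]
  convert ((tendsto_const_nhds.sub (tendsto_survival hl htop hstep)).div_const l).add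
    (tendsto_const_nhds.sub (tendsto_mul_survival hl ht0 hmono htop hstep)) using 2
  simp

theorem sum_range_sq_mul_mass_le (hl : l ≠ 0) (hmono : Monotone t)
    (hstep : ∀ k, l * (t (k + 1) - t k) ≤ 1) (N : ℕ) :
    ∑ k ∈ range N, mass l t k * t (k + 1) ^ 2 ≤
      2 / l * ∑ k ∈ range N, mass l t k * t (k + 1) + t 0 ^ 2 := by
  have hterm (k : ℕ) : mass l t k * t (k + 1) ^ 2 ≤ 2 / l * (mass l t k * t (k + 1)) +
      (t k ^ 2 * survival l t k - t (k + 1) ^ 2 * survival l t (k + 1)) := by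
    have hinc : t k ≤ t (k + 1) := hmono k.le_succ
    have hΔQ : 0 ≤ (t (k + 1) - t k) * survival l t k :=
      mul_nonneg (sub_nonneg.2 hinc) (survival_nonneg hstep k)
    have hsplit : mass l t k * t (k + 1) ^ 2 =
        (t (k + 1) + t k) * ((t (k + 1) - t k) * survival l t k) +
          (t k ^ 2 * survival l t k - t (k + 1) ^ 2 * survival l t (k + 1)) := by
      rw [mass_eq_survival_sub]
      ring
    have hmass : 2 * t (k + 1) * ((t (k + 1) - t k) * survival l t k) =
        2 / l * (mass l t k * t (k + 1)) := by
      rw [mass]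
      field_simp
    rw [hsplit, ← hmass]
    have := mul_le_mul_of_nonneg_right (by linarith : t (k + 1) + t k ≤ 2 * t (k + 1)) hΔQ
    linarith
  calc ∑ k ∈ range N, mass l t k * t (k + 1) ^ 2
      ≤ ∑ k ∈ range N, (2 / l * (mass l t k * t (k + 1)) +
          (t k ^ 2 * survival l t k - t (k + 1) ^ 2 * survival l t (k + 1))) :=
        sum_le_sum fun k _ => hterm k
    _ = 2 / l * ∑ k ∈ range N, mass l t k * t (k + 1) + t 0 ^ 2 -
          t N ^ 2 * survival l t N := by
        rw [sum_add_distrib, ← mul_sum, sum_range_sub' (fun k => t k ^ 2 * survival l t k),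
          survival_zero, mul_one, add_sub_assoc]
    _ ≤ 2 / l * ∑ k ∈ range N, mass l t k * t (k + 1) + t 0 ^ 2 :=
        sub_le_self _ (mul_nonneg (sq_nonneg _) (survival_nonneg hstep N))

theorem sum_range_sq_mul_mass_le_two_div_sq (hl : 0 < l) (ht0 : t 0 = 0) (hmono : Monotone t)
    (htop : Tendsto t atTop atTop) (hstep : ∀ k, l * (t (k + 1) - t k) ≤ 1) (N : ℕ) :
    ∑ k ∈ range N, mass l t k * t (k + 1) ^ 2 ≤ 2 / l ^ 2 := by
  have hmean : ∑ k ∈ range N, mass l t k * t (k + 1) ≤ 1 / l :=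
    sum_le_hasSum _ (fun k _ => mul_nonneg (mass_nonneg hl.le hmono hstep k)
      (ht0 ▸ hmono (Nat.zero_le _))) (hasSum_mul_mass hl ht0 hmono htop hstep)
  calc ∑ k ∈ range N, mass l t k * t (k + 1) ^ 2
      ≤ 2 / l * ∑ k ∈ range N, mass l t k * t (k + 1) + t 0 ^ 2 :=
        sum_range_sq_mul_mass_le hl.ne' hmono hstep N
    _ ≤ 2 / l * (1 / l) + 0 := by
        rw [ht0]
        gcongr
        simp
    _ = 2 / l ^ 2 := by ring

end DiscretizedExponential

open DiscretizedExponential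

/-- Mean and variance of the discretized exponential holding time. -/
theorem stmt3 {Ω : Type*} [MeasureSpace Ω]
    [IsProbabilityMeasure (volume : Measure Ω)]
    (X : Ω → ℝ) (hX : Measurable X)
    (t : ℕ → ℝ) (ht0 : t 0 = 0) (hmono : StrictMono t)
    (htop : Filter.Tendsto t Filter.atTop Filter.atTop)
    (l : ℝ) (hl : 0 < l) (hstep : ∀ i : ℕ, 1 ≤ i → l * (t i - t (i - 1)) ≤ 1)
    (hdist : ∀ i : ℕ, 1 ≤ i →
      volume {ω | X ω = t i} =
        ENNReal.ofReal (l * (t i - t (i - 1)) *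
          ∏ j ∈ Finset.Icc 1 (i - 1), (1 - l * (t j - t (j - 1))))) :
    (∫ ω, X ω) = 1 / l ∧ ProbabilityTheory.variance X volume ≤ 1 / l ^ 2 := by
  have hstep' (k : ℕ) : l * (t (k + 1) - t k) ≤ 1 := by simpa using hstep (k + 1) k.succ_pos
  have hmass (k : ℕ) : volume (X ⁻¹' {t (k + 1)}) = ENNReal.ofReal (mass l t k) := by
    have h := hdist (k + 1) k.succ_pos
    simp only [Nat.add_sub_cancel, prod_Icc_eq_survival] at h
    exact h
  have hp := mass_nonneg hl.le hmono.monotone hstep'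
  have hmap := map_eq_sum_smul_dirac_of_hasSum hX (hmono.injective.comp (add_left_injective 1))
    hp (hasSum_mass hl hmono.monotone htop hstep') hmass
  have ht (k : ℕ) : 0 ≤ t (k + 1) := ht0 ▸ hmono.monotone (k + 1).zero_le
  have hmean := hasSum_mul_mass hl ht0 hmono.monotone htop hstep'
  have hsq := sum_range_sq_mul_mass_le_two_div_sq hl ht0 hmono.monotone htop hstep'
  have hsq_nonneg (k : ℕ) : 0 ≤ mass l t k * t (k + 1) ^ 2 := mul_nonneg (hp k) (sq_nonneg _)
  have hsq_summable : Summable fun k => mass l t k * ‖t (k + 1) ^ 2‖ := by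
    simpa using summable_of_sum_range_le hsq_nonneg hsq
  have hEX : ∫ ω, X ω = 1 / l := by
    rw [integral_comp_eq_tsum (f := fun x => x) hX hp hmap stronglyMeasurable_id
      (by simpa [Real.norm_of_nonneg (ht _)] using hmean.summable)]
    exact hmean.tsum_eq
  have hEX2 : ∫ ω, X ω ^ 2 = ∑' k, mass l t k * t (k + 1) ^ 2 :=
    integral_comp_eq_tsum (f := fun x => x ^ 2) hX hp hmap
      (measurable_id.pow_const 2).stronglyMeasurable hsq_summable
  have hX2 : MemLp X 2 volume := (memLp_two_iff_integrable_sq hX.aestronglyMeasurable).2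
    (integrable_comp_of_summable (f := fun x => x ^ 2) hX hp hmap
      (measurable_id.pow_const 2).stronglyMeasurable hsq_summable)
  refine ⟨hEX, ?_⟩
  rw [ProbabilityTheory.variance_eq_sub hX2, Pi.pow_def, hEX2, hEX, div_pow, one_pow]
  linarith [Real.tsum_le_of_sum_range_le hsq_nonneg hsq,
    show 2 / l ^ 2 = 1 / l ^ 2 + 1 / l ^ 2 by ring]
end

section
/- Let ξ*(t) = t - 1 - log t for t > 0. Then for any ζ > 0 and t > 0, |ξ*(ζt) - ξ*(t)| ≤ 2|ζ - 1| + |log ζ| + 2|ζ - 1|·ξ*(t). -/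
/-!
Since `ξ*(ζt) - ξ*(t) = (ζ - 1) t - log ζ`, it suffices to bound `t` linearly by `ξ*(t)`,
and `t ≤ 2 + 2 ξ*(t)` is the inequality `2 log t ≤ t`, i.e. `log (t / 2) ≤ t / 2 - 1` plus `log 2 < 1`.
-/

open Real

namespace Real

theorem two_mul_log_le_self {t : ℝ} (ht : 0 < t) : 2 * log t ≤ t := by
  have hhalf : log (t / 2) ≤ t / 2 - 1 := log_le_sub_one_of_pos (by positivity)
  rw [log_div ht.ne' two_ne_zero] at hhalf
  linarith [log_two_lt_d9]

noncomputable def xiStar (t : ℝ) : ℝ := t - 1 - log t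

theorem xiStar_mul_sub_xiStar {ζ t : ℝ} (hζ : 0 < ζ) (ht : 0 < t) :
    xiStar (ζ * t) - xiStar t = (ζ - 1) * t - log ζ := by
  rw [xiStar, xiStar, log_mul hζ.ne' ht.ne']
  ring

theorem le_two_add_two_mul_xiStar {t : ℝ} (ht : 0 < t) : t ≤ 2 + 2 * xiStar t := by
  rw [xiStar]
  linarith [two_mul_log_le_self ht]

theorem abs_xiStar_mul_sub_xiStar_le {ζ t : ℝ} (hζ : 0 < ζ) (ht : 0 < t) :
    |xiStar (ζ * t) - xiStar t| ≤ 2 * |ζ - 1| + |log ζ| + 2 * |ζ - 1| * xiStar t :=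
  calc |xiStar (ζ * t) - xiStar t|
      = |(ζ - 1) * t - log ζ| := by rw [xiStar_mul_sub_xiStar hζ ht]
    _ ≤ |ζ - 1| * t + |log ζ| := by
        simpa only [abs_mul, abs_of_pos ht] using abs_sub ((ζ - 1) * t) (log ζ)
    _ ≤ |ζ - 1| * (2 + 2 * xiStar t) + |log ζ| := by
        gcongr
        exact le_two_add_two_mul_xiStar ht
    _ = 2 * |ζ - 1| + |log ζ| + 2 * |ζ - 1| * xiStar t := by ring

end Real

/-- Stability estimate for `ξ*(t) = t - 1 - log t` under multiplicative perturbation. -/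
theorem stmt5 (ζ t : ℝ) (hζ : 0 < ζ) (ht : 0 < t) :
    |((ζ * t) - 1 - Real.log (ζ * t)) - (t - 1 - Real.log t)| ≤
      2 * |ζ - 1| + |Real.log ζ| + 2 * |ζ - 1| * (t - 1 - Real.log t) :=
  Real.abs_xiStar_mul_sub_xiStar_le hζ ht
end

section
/- Fix 0 < α < 1/2. Let A₀ be the set of absolutely continuous functions x : [0,∞) → ℝ with x(0) = 0 and max_{t∈[1/2,1]} x(t) ≥ 2·u_max, where u_max = (1/2)·(1-α)/(1-2α). Define I(x) = (1/2)∫_0^∞ (x'(t))² t^{α/(1-α)} dt. Then for every x ∈ A₀ with I(x) < ∞, I(x) ≥ u_max, with equality if and only if x(t) = ((1-α)/(1-2α))·(t^{(1-2α)/(1-α)} ∧ 1) for all t ≥ 0. -/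
/-!
Write `β = α / (1 - α)`, so that `u_max = 1 / (2 (1 - β))` and the weight is `t ^ β`. Since
`t ^ β * t ^ (-β) = 1`, completing the square gives, on `(0, T]`,
`x' ^ 2 * t ^ β = (x' - t ^ (-β)) ^ 2 * t ^ β + 2 x' - t ^ (-β)`, hence
`∫₀^∞ x' ^ 2 t ^ β ≥ 2 x(T) - T ^ (1 - β) / (1 - β) ≥ 1 / (1 - β)` for a point `T ≤ 1` where
`x(T) ≥ 1 / (1 - β)`. Equality forces `T = 1`, `x' = t ^ (-β)` a.e. on `(0, 1]` and `x' = 0` a.e.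
on `(1, ∞)`, i.e. `x` is the profile; conversely the profile has energy exactly `1 / (1 - β)`.
-/

open MeasureTheory Set

theorem ae_eq_zero_of_forall_setIntegral_Ioc_eq_zero {μ : Measure ℝ} [SigmaFinite μ]
    {f : ℝ → ℝ} (hf : ∀ a b, IntegrableOn f (Ioc a b) μ)
    (h : ∀ a b, a < b → ∫ u in Ioc a b, f u ∂μ = 0) : f =ᵐ[μ] 0 := by
  have hmeas : AEMeasurable f μ := by
    rw [← μ.restrict_univ, ← iUnion_Ioc_add_intCast 0, aemeasurable_iUnion_iff]
    exact fun n => (hf _ _).aemeasurable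
  have hfin : ∀ {g : ℝ → ℝ} {s : Set ℝ}, IntegrableOn g s μ →
      ∫⁻ u in s, ENNReal.ofReal (g u) ∂μ ≠ ⊤ := fun hg =>
    ((lintegral_mono fun u => Real.ofReal_le_enorm _).trans_lt hg.2).ne
  -- the positive and negative parts of `f` define measures agreeing on intervals
  have hparts : μ.withDensity (fun u => ENNReal.ofReal (f u)) =
      μ.withDensity (fun u => ENNReal.ofReal (-f u)) := by
    refine Measure.ext_of_Ioc' _ _ (fun a b _ => ?_) (fun a b hab => ?_) <;>
      rw [withDensity_apply _ measurableSet_Ioc]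
    · exact hfin (hf a b)
    rw [withDensity_apply _ measurableSet_Ioc, ← ENNReal.toReal_eq_toReal_iff' (hfin (hf a b))
      (hfin (g := fun u => -f u) (hf a b).neg), ← sub_eq_zero,
      ← integral_eq_lintegral_pos_part_sub_lintegral_neg_part (hf a b), h a b hab]
  filter_upwards [(withDensity_eq_iff_of_sigmaFinite hmeas.ennreal_ofReal
    hmeas.neg.ennreal_ofReal).1 hparts] with u hu
  rcases le_total (f u) 0 with hu' | hu'
  · exact hu'.antisymm (by simpa [ENNReal.ofReal_of_nonpos hu', eq_comm] using hu)
  · exact (le_antisymm (by simpa [ENNReal.ofReal_of_nonpos (neg_nonpos.2 hu')] using hu) hu')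

section WeightedSquare

variable {X : Type*} [MeasurableSpace X] {μ : Measure X} {f g w : X → ℝ}

theorem sub_sq_mul_ae_eq (hwg : ∀ᵐ t ∂μ, w t * g t = 1) :
    (fun t => (f t - g t) ^ 2 * w t) =ᵐ[μ] fun t => f t ^ 2 * w t - 2 * f t + g t := by
  filter_upwards [hwg] with t ht
  linear_combination (g t - 2 * f t) * ht

theorem Integrable.sub_sq_mul (hwg : ∀ᵐ t ∂μ, w t * g t = 1) (hf : Integrable f μ)
    (hg : Integrable g μ) (hfw : Integrable (fun t => f t ^ 2 * w t) μ) :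
    Integrable (fun t => (f t - g t) ^ 2 * w t) μ :=
  ((hfw.sub (hf.const_mul 2)).add hg).congr (sub_sq_mul_ae_eq hwg).symm

theorem integral_sq_mul_eq_integral_sub_sq_mul (hwg : ∀ᵐ t ∂μ, w t * g t = 1)
    (hf : Integrable f μ) (hg : Integrable g μ) (hfw : Integrable (fun t => f t ^ 2 * w t) μ) :
    ∫ t, f t ^ 2 * w t ∂μ = ∫ t, (f t - g t) ^ 2 * w t ∂μ + 2 * ∫ t, f t ∂μ - ∫ t, g t ∂μ := by
  have hfw' : Integrable (fun t => f t ^ 2 * w t - 2 * f t) μ := hfw.sub (hf.const_mul 2)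
  rw [integral_congr_ae (sub_sq_mul_ae_eq hwg), integral_add hfw' hg,
    integral_sub hfw (hf.const_mul 2), integral_const_mul]
  ring

theorem ae_eq_of_integral_sub_sq_mul_eq_zero (hw : ∀ᵐ t ∂μ, 0 < w t)
    (hint : Integrable (fun t => (f t - g t) ^ 2 * w t) μ)
    (h0 : ∫ t, (f t - g t) ^ 2 * w t ∂μ = 0) : f =ᵐ[μ] g := by
  have hnonneg : 0 ≤ᵐ[μ] fun t => (f t - g t) ^ 2 * w t := by
    filter_upwards [hw] with t ht using mul_nonneg (sq_nonneg _) ht.le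
  filter_upwards [(integral_eq_zero_iff_of_nonneg_ae hnonneg hint).1 h0, hw] with t ht hwt
  simpa [hwt.ne', sub_eq_zero] using ht

end WeightedSquare

noncomputable def profile (β t : ℝ) : ℝ := (1 - β)⁻¹ * min (t ^ (1 - β)) 1

noncomputable def profileDeriv (β : ℝ) : ℝ → ℝ := (Ioc 0 1).indicator fun u => u ^ (-β)

theorem rpow_mul_rpow_neg_ae_eq_one (β : ℝ) :
    ∀ᵐ t : ℝ ∂volume.restrict (Ioi 0), t ^ β * t ^ (-β) = 1 := by
  filter_upwards [ae_restrict_mem measurableSet_Ioi] with t ht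
  rw [Real.rpow_neg (le_of_lt ht), mul_inv_cancel₀ (Real.rpow_pos_of_pos ht β).ne']

section Profile

variable {β : ℝ}

theorem integral_rpow_neg_Ioc (hβ : β < 1) {T : ℝ} (hT : 0 ≤ T) :
    ∫ u in Ioc 0 T, u ^ (-β) = T ^ (1 - β) / (1 - β) := by
  rw [← intervalIntegral.integral_of_le hT, integral_rpow (Or.inl (by linarith)),
    Real.zero_rpow (by linarith)]
  ring_nf

theorem integrableOn_rpow_neg_Ioc (hβ : β < 1) (T : ℝ) :
    IntegrableOn (fun u => u ^ (-β)) (Ioc 0 T) :=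
  (intervalIntegral.intervalIntegrable_rpow' (by linarith)).1

theorem integrable_profileDeriv (hβ : β < 1) : Integrable (profileDeriv β) :=
  (integrableOn_rpow_neg_Ioc hβ 1).integrable_indicator measurableSet_Ioc

theorem integral_profileDeriv (hβ : β < 1) {t : ℝ} (ht : 0 ≤ t) :
    ∫ u in 0..t, profileDeriv β u = profile β t := by
  rw [intervalIntegral.integral_of_le ht, profileDeriv, setIntegral_indicator measurableSet_Ioc,
    Ioc_inter_Ioc, max_self, integral_rpow_neg_Ioc hβ (le_min ht zero_le_one), profile,
    div_eq_inv_mul]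
  rcases le_total t 1 with ht1 | ht1
  · rw [min_eq_left ht1, min_eq_left (Real.rpow_le_one ht ht1 (by linarith))]
  · rw [min_eq_right ht1, min_eq_right (Real.one_le_rpow ht1 (by linarith)), Real.one_rpow]

theorem profileDeriv_sq_mul_rpow {u : ℝ} (hu : 0 < u) :
    profileDeriv β u ^ 2 * u ^ β = profileDeriv β u := by
  by_cases hu1 : u ∈ Ioc 0 1
  · have : u ^ β ≠ 0 := (Real.rpow_pos_of_pos hu β).ne'
    simp only [profileDeriv, indicator_of_mem hu1, Real.rpow_neg hu.le]
    field_simp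
  · simp [profileDeriv, indicator_of_notMem hu1]

theorem integral_profileDeriv_sq_mul_rpow (hβ : β < 1) :
    ∫ u in Ioi 0, profileDeriv β u ^ 2 * u ^ β = (1 - β)⁻¹ := by
  rw [setIntegral_congr_fun measurableSet_Ioi fun u hu => profileDeriv_sq_mul_rpow hu,
    profileDeriv, setIntegral_indicator measurableSet_Ioc,
    inter_eq_right.2 Ioc_subset_Ioi_self, integral_rpow_neg_Ioc hβ zero_le_one, Real.one_rpow,
    one_div]

end Profile

-- A non-integrable `f` would have interval integral `0`.
theorem integrableOn_Ioc_of_sub_eq_integral {x f : ℝ → ℝ} {a b : ℝ} (hab : a ≤ b)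
    (hx : x b - x a = ∫ u in a..b, f u) (hne : x a ≠ x b) : IntegrableOn f (Ioc a b) :=
  (intervalIntegrable_iff_integrableOn_Ioc_of_le hab).1 <|
    intervalIntegral.intervalIntegrable_of_integral_ne_zero (hx ▸ sub_ne_zero.2 hne.symm)

theorem eq_profile_iff_ae_eq_profileDeriv {β : ℝ} (hβ : β < 1) {x x' : ℝ → ℝ} (hx0 : x 0 = 0)
    (hftc : ∀ s t : ℝ, 0 ≤ s → s ≤ t → x t - x s = ∫ u in s..t, x' u) :
    (∀ t, 0 ≤ t → x t = profile β t) ↔ x' =ᵐ[volume.restrict (Ioi 0)] profileDeriv β := by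
  have hz := integrable_profileDeriv hβ
  constructor
  · intro hx
    have hx' : ∀ b, IntegrableOn x' (Ioc 0 b) := by
      intro b
      rcases le_or_gt b 0 with hb | hb
      · rw [Ioc_eq_empty hb.not_gt]; exact integrableOn_empty
      refine integrableOn_Ioc_of_sub_eq_integral hb.le (hftc 0 b le_rfl hb.le) ?_
      rw [hx0, hx b hb.le, profile]
      exact (mul_pos (inv_pos.2 (by linarith))
        (lt_min (Real.rpow_pos_of_pos hb _) one_pos)).ne
    have hres : ∀ a b, (volume.restrict (Ioi (0 : ℝ))).restrict (Ioc a b) =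
        volume.restrict (Ioc (a ⊔ 0) b) := fun a b => by
      rw [Measure.restrict_restrict measurableSet_Ioc, Ioc_inter_Ioi]
    have hzero := ae_eq_zero_of_forall_setIntegral_Ioc_eq_zero (μ := volume.restrict (Ioi 0))
      (f := x' - profileDeriv β) (fun a b => ?_) (fun a b _ => ?_)
    · filter_upwards [hzero] with u hu using sub_eq_zero.1 hu
    · rw [IntegrableOn, hres]
      exact ((hx' b).mono_set (Ioc_subset_Ioc_left le_sup_right)).sub hz.integrableOn
    · rw [hres]
      set p := a ⊔ 0
      rcases le_or_gt b p with hbp | hpb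
      · rw [Ioc_eq_empty hbp.not_gt, Measure.restrict_empty, integral_zero_measure]
      have hp : 0 ≤ p := le_sup_right
      have hx'pb : IntervalIntegrable x' volume p b :=
        (intervalIntegrable_iff_integrableOn_Ioc_of_le hpb.le).2
          ((hx' b).mono_set (Ioc_subset_Ioc_left hp))
      rw [← intervalIntegral.integral_of_le hpb.le, Pi.sub_def,
        intervalIntegral.integral_sub hx'pb hz.intervalIntegrable, ← hftc p b hp hpb.le,
        ← intervalIntegral.integral_interval_sub_left hz.intervalIntegrable hz.intervalIntegrable,
        integral_profileDeriv hβ (hp.trans hpb.le), integral_profileDeriv hβ hp, hx p hp,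
        hx b (hp.trans hpb.le), sub_self]
  · intro hx' t ht
    have hxt := hftc 0 t le_rfl ht
    rw [hx0, sub_zero, intervalIntegral.integral_of_le ht] at hxt
    rw [hxt, ← integral_profileDeriv hβ ht, intervalIntegral.integral_of_le ht]
    exact integral_congr_ae (ae_restrict_of_ae_restrict_of_subset Ioc_subset_Ioi_self hx')

theorem integral_sq_mul_rpow_eq {β : ℝ} (hβ : β < 1) {f : ℝ → ℝ}
    (hf : IntegrableOn (fun t => f t ^ 2 * t ^ β) (Ioi 0)) {T : ℝ} (hT : 0 ≤ T)
    (hfT : IntegrableOn f (Ioc 0 T)) :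
    ∫ t in Ioi 0, f t ^ 2 * t ^ β =
      (∫ t in Ioc 0 T, (f t - t ^ (-β)) ^ 2 * t ^ β) + (∫ t in Ioi T, f t ^ 2 * t ^ β) +
        2 * (∫ t in Ioc 0 T, f t) - T ^ (1 - β) / (1 - β) := by
  have hwg := ae_restrict_of_ae_restrict_of_subset (Ioc_subset_Ioi_self (a := T))
    (rpow_mul_rpow_neg_ae_eq_one β)
  rw [← Ioc_union_Ioi_eq_Ioi hT, setIntegral_union Ioc_disjoint_Ioi_same measurableSet_Ioi
      (hf.mono_set Ioc_subset_Ioi_self) (hf.mono_set (Ioi_subset_Ioi hT)),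
    integral_sq_mul_eq_integral_sub_sq_mul hwg hfT (integrableOn_rpow_neg_Ioc hβ T)
      (hf.mono_set Ioc_subset_Ioi_self), integral_rpow_neg_Ioc hβ hT]
  ring

theorem ae_eq_profileDeriv_of_integral_sq_eq_zero {β : ℝ} (hβ : β < 1) {f : ℝ → ℝ}
    (hf : IntegrableOn (fun t => f t ^ 2 * t ^ β) (Ioi 0)) (hf1 : IntegrableOn f (Ioc 0 1))
    (hS : ∫ t in Ioc 0 1, (f t - t ^ (-β)) ^ 2 * t ^ β = 0)
    (hR : ∫ t in Ioi 1, f t ^ 2 * t ^ β = 0) :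
    f =ᵐ[volume.restrict (Ioi 0)] profileDeriv β := by
  rw [← Ioc_union_Ioi_eq_Ioi zero_le_one, Filter.EventuallyEq, ae_restrict_union_iff]
  constructor
  · have hwg := ae_restrict_of_ae_restrict_of_subset (Ioc_subset_Ioi_self (a := (1 : ℝ)))
      (rpow_mul_rpow_neg_ae_eq_one β)
    have hS' := ae_eq_of_integral_sub_sq_mul_eq_zero (μ := volume.restrict (Ioc 0 1))
      (by filter_upwards [ae_restrict_mem measurableSet_Ioc] with t ht
            using Real.rpow_pos_of_pos ht.1 β)
      (Integrable.sub_sq_mul hwg hf1 (integrableOn_rpow_neg_Ioc hβ 1)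
        (hf.mono_set Ioc_subset_Ioi_self))
      hS
    filter_upwards [hS', ae_restrict_mem measurableSet_Ioc] with t ht ht'
    rw [ht, profileDeriv, indicator_of_mem ht']
  · have hR' := ae_eq_of_integral_sub_sq_mul_eq_zero (μ := volume.restrict (Ioi (1 : ℝ)))
      (g := fun _ => 0)
      (by filter_upwards [ae_restrict_mem measurableSet_Ioi] with t ht
            using Real.rpow_pos_of_pos (zero_lt_one.trans (mem_Ioi.1 ht)) β)
      (by simpa [IntegrableOn] using hf.mono_set (Ioi_subset_Ioi zero_le_one))
      (by simpa using hR)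
    filter_upwards [hR', ae_restrict_mem measurableSet_Ioi] with t ht ht'
    rw [ht, profileDeriv, indicator_of_notMem fun h => (not_lt.2 h.2) ht']

theorem inv_one_sub_le_integral_and_eq_iff_eq_profile {β : ℝ} (hβ : β < 1) {x x' : ℝ → ℝ}
    (hx0 : x 0 = 0) (hftc : ∀ s t : ℝ, 0 ≤ s → s ≤ t → x t - x s = ∫ u in s..t, x' u)
    (hint : IntegrableOn (fun t => x' t ^ 2 * t ^ β) (Ioi 0))
    (hmax : ∃ T ∈ Ioc (0 : ℝ) 1, (1 - β)⁻¹ ≤ x T) :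
    (1 - β)⁻¹ ≤ ∫ t in Ioi 0, x' t ^ 2 * t ^ β ∧
      (∫ t in Ioi 0, x' t ^ 2 * t ^ β = (1 - β)⁻¹ ↔ ∀ t, 0 ≤ t → x t = profile β t) := by
  obtain ⟨T, ⟨hT0, hT1⟩, hxT⟩ := hmax
  have hβ' : 0 < 1 - β := by linarith
  have hxT' : ∫ t in Ioc 0 T, x' t = x T := by
    rw [← intervalIntegral.integral_of_le hT0.le, ← hftc 0 T le_rfl hT0.le, hx0, sub_zero]
  have hx'T : IntegrableOn x' (Ioc 0 T) :=
    integrableOn_Ioc_of_sub_eq_integral hT0.le (hftc 0 T le_rfl hT0.le)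
      (by rw [hx0]; exact (lt_of_lt_of_le (inv_pos.2 hβ') hxT).ne)
  have hsplit := integral_sq_mul_rpow_eq hβ hint hT0.le hx'T
  rw [hxT'] at hsplit
  set S := ∫ t in Ioc 0 T, (x' t - t ^ (-β)) ^ 2 * t ^ β
  set R := ∫ t in Ioi T, x' t ^ 2 * t ^ β
  have hS : 0 ≤ S := setIntegral_nonneg measurableSet_Ioc fun t ht =>
    mul_nonneg (sq_nonneg _) (Real.rpow_nonneg ht.1.le _)
  have hR : 0 ≤ R := setIntegral_nonneg measurableSet_Ioi fun t ht =>
    mul_nonneg (sq_nonneg _) (Real.rpow_nonneg (hT0.trans ht).le _)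
  have hTβ : T ^ (1 - β) / (1 - β) ≤ (1 - β)⁻¹ := by
    rw [div_eq_mul_inv]
    exact mul_le_of_le_one_left (inv_pos.2 hβ').le (Real.rpow_le_one hT0.le hT1 hβ'.le)
  refine ⟨by linarith, fun heq => ?_, fun hx => ?_⟩
  · have hT : T = 1 := by
      by_contra hT
      have : T ^ (1 - β) / (1 - β) < (1 - β)⁻¹ := by
        rw [div_eq_mul_inv]
        exact mul_lt_of_lt_one_left (inv_pos.2 hβ')
          (Real.rpow_lt_one hT0.le (lt_of_le_of_ne hT1 hT) hβ')
      linarith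
    subst hT
    exact (eq_profile_iff_ae_eq_profileDeriv hβ hx0 hftc).2 <|
      ae_eq_profileDeriv_of_integral_sq_eq_zero hβ hint hx'T (by linarith) (by linarith)
  · rw [integral_congr_ae, integral_profileDeriv_sq_mul_rpow hβ]
    filter_upwards [(eq_profile_iff_ae_eq_profileDeriv hβ hx0 hftc).1 hx] with t ht
    rw [ht]

theorem stmt9_general (α : ℝ) (hα : α < 1/2)
    (x x' : ℝ → ℝ) (hx0 : x 0 = 0)
    (hftc : ∀ s t : ℝ, 0 ≤ s → s ≤ t → x t - x s = ∫ u in s..t, x' u)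
    (hint : IntegrableOn (fun t => (x' t) ^ 2 * t ^ (α / (1 - α))) (Set.Ioi 0))
    (hmax : ∃ t ∈ Set.Icc (1/2 : ℝ) 1, 2 * ((1/2) * (1 - α) / (1 - 2 * α)) ≤ x t) :
    ((1/2) * (1 - α) / (1 - 2 * α)) ≤
        (1/2) * ∫ t in Set.Ioi (0:ℝ), (x' t) ^ 2 * t ^ (α / (1 - α)) ∧
      ((1/2) * ∫ t in Set.Ioi (0:ℝ), (x' t) ^ 2 * t ^ (α / (1 - α)) =
          (1/2) * (1 - α) / (1 - 2 * α) ↔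
        ∀ t : ℝ, 0 ≤ t →
          x t = ((1 - α) / (1 - 2 * α)) * min (t ^ ((1 - 2 * α) / (1 - α))) 1) := by
  have h1α : 1 - α ≠ 0 := by linarith
  set β := α / (1 - α)
  have hβ : β < 1 := (div_lt_one (by linarith)).2 (by linarith)
  have hexp : (1 - 2 * α) / (1 - α) = 1 - β := by
    simp only [β]
    field_simp
    ring
  have hc : (1 - α) / (1 - 2 * α) = (1 - β)⁻¹ := by rw [← hexp, inv_div]
  obtain ⟨T, ⟨hT0, hT1⟩, hxT⟩ := hmax
  rw [mul_div_assoc, hc] at hxT ⊢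
  rw [hexp]
  obtain ⟨hle, hiff⟩ := inv_one_sub_le_integral_and_eq_iff_eq_profile hβ hx0 hftc hint
    ⟨T, ⟨by linarith, hT1⟩, by linarith⟩
  exact ⟨by linarith, (mul_right_inj' one_half_pos.ne').trans hiff⟩

/-- The minimal rate on `A₀` is `u_max`, attained uniquely at the profile `z`. -/
theorem stmt9 (α : ℝ) (hα0 : 0 < α) (hα : α < 1/2)
    (x x' : ℝ → ℝ) (hx0 : x 0 = 0)
    (hftc : ∀ s t : ℝ, 0 ≤ s → s ≤ t → x t - x s = ∫ u in s..t, x' u)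
    (hint : IntegrableOn (fun t => (x' t) ^ 2 * t ^ (α / (1 - α))) (Set.Ioi 0))
    (hmax : ∃ t ∈ Set.Icc (1/2 : ℝ) 1, 2 * ((1/2) * (1 - α) / (1 - 2 * α)) ≤ x t) :
    ((1/2) * (1 - α) / (1 - 2 * α)) ≤
        (1/2) * ∫ t in Set.Ioi (0:ℝ), (x' t) ^ 2 * t ^ (α / (1 - α)) ∧
      ((1/2) * ∫ t in Set.Ioi (0:ℝ), (x' t) ^ 2 * t ^ (α / (1 - α)) =
          (1/2) * (1 - α) / (1 - 2 * α) ↔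
        ∀ t : ℝ, 0 ≤ t →
          x t = ((1 - α) / (1 - 2 * α)) * min (t ^ ((1 - 2 * α) / (1 - α))) 1) :=
  stmt9_general α hα x x' hx0 hftc hint hmax
end

section
/- Fix 0 ≤ α < 1 and, for 0 < t₁ < ∞, consider the functional J(x) = ∫_0^∞ x(t)^{α/(1-α)}·ψ(x'(t)) dt over nondecreasing absolutely continuous x : [0,∞) → [0,∞) with x(0) = 0, where ψ(t) = 1 − t + t log t. If x is nondecreasing, absolutely continuous, and δ ∈ (0,1), t ≥ 0 satisfy ε := x(t+δ) − x(t) ≥ 2e·δ^{1/2}, then J(x) ≥ (ε/2)^{1/(1-α)}·log(ε/(2eδ)) and consequently x(t+δ) − x(t) ≤ max(2·(J(x)/log δ^{-1/2})^{1-α}, 2e·δ^{1/2}). In particular the sublevel sets {J ≤ η} are uniformly equicontinuous. -/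
/-!
On `[t + δ', t + δ]`, where `t + δ'` is chosen so that `x` has climbed half of its increment
`ε = x (t + δ) - x t`, the weight `x ^ (α / (1 - α))` is at least `(ε / 2) ^ (α / (1 - α))` and the
mean of `x'` is `(ε / 2) / (δ - δ')`. Jensen's inequality for the convex function
`ψ(s) = 1 - s + s log s` (Mathlib's `klFun`) then bounds `J(x)` below by
`(ε / 2) ^ (1 / (1 - α)) * log (ε / (2 e δ))`. When `ε ≥ 2 e δ ^ (1/2)` this logarithm is at least
`log δ ^ (-1/2) > 0`, and solving for `ε` gives the modulus of continuity.
-/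

open MeasureTheory Set Real InformationTheory Filter Topology

lemma klFun_add_log_mul_sub_le {s m : ℝ} (hs : 0 ≤ s) (hm : 0 < m) :
    klFun m + log m * (s - m) ≤ klFun s := by
  rcases hs.eq_or_lt with rfl | hs
  · rw [klFun_apply, klFun_zero]
    linarith
  · have h := mul_le_mul_of_nonneg_left (log_le_sub_one_of_pos (div_pos hm hs)) hs.le
    rw [log_div hm.ne' hs.ne', mul_sub_one, mul_div_cancel₀ _ hs.ne'] at h
    simp only [klFun_apply]
    linarith

lemma ae_nonneg_of_monotoneOn_primitive {g : ℝ → ℝ} {a b : ℝ}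
    (hg : IntervalIntegrable g volume a b)
    (hmono : MonotoneOn (fun u => ∫ v in a..u, g v) (Icc a b)) :
    ∀ᵐ u, u ∈ Ioo a b → 0 ≤ g u := by
  filter_upwards [hg.ae_hasDerivAt_integral] with u hu huI
  have hIcc : u ∈ uIcc a b := by
    rw [uIcc_of_le (huI.1.trans huI.2).le]; exact Ioo_subset_Icc_self huI
  have hacc : AccPt u (𝓟 (Icc a b)) := by
    have hne : (𝓝[Ioo u b] u).NeBot := by
      rw [nhdsWithin_Ioo_eq_nhdsGT huI.2]; infer_instance
    refine accPt_principal_iff_nhdsWithin.2 (hne.mono (nhdsWithin_mono _ ?_))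
    exact fun y hy => ⟨⟨huI.1.le.trans hy.1.le, hy.2.le⟩, hy.1.ne'⟩
  exact ((hu hIcc a left_mem_uIcc).hasDerivWithinAt).nonneg_of_monotoneOn hacc hmono

lemma le_setIntegral_mul_klFun {w g : ℝ → ℝ} {a b c : ℝ} (hab : a < b) (hc : 0 ≤ c)
    (hw : ∀ u ∈ Ioc a b, c ≤ w u) (hg0 : ∀ᵐ u, u ∈ Ioc a b → 0 ≤ g u)
    (hg : IntegrableOn g (Ioc a b)) (hpos : 0 < ∫ u in Ioc a b, g u)
    (hwg : IntegrableOn (fun u => w u * klFun (g u)) (Ioc a b)) :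
    c * ((b - a) * klFun ((∫ u in Ioc a b, g u) / (b - a))) ≤
      ∫ u in Ioc a b, w u * klFun (g u) := by
  set I := ∫ u in Ioc a b, g u
  set m := I / (b - a)
  have hd : 0 < b - a := sub_pos.2 hab
  have hm : 0 < m := div_pos hpos hd
  have htangent : ∀ᵐ u ∂volume.restrict (Ioc a b),
      c * (klFun m + log m * (g u - m)) ≤ w u * klFun (g u) := by
    rw [ae_restrict_iff' measurableSet_Ioc]
    filter_upwards [hg0] with u hu huI
    calc c * (klFun m + log m * (g u - m)) ≤ c * klFun (g u) :=
          mul_le_mul_of_nonneg_left (klFun_add_log_mul_sub_le (hu huI) hm) hc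
      _ ≤ w u * klFun (g u) :=
          mul_le_mul_of_nonneg_right (hw u huI) (klFun_nonneg (hu huI))
  have hgm : IntegrableOn (fun u => log m * (g u - m)) (Ioc a b) :=
    (hg.sub (integrable_const m)).const_mul (log m)
  have htangent_int : IntegrableOn (fun u => c * (klFun m + log m * (g u - m))) (Ioc a b) :=
    ((integrable_const _).add hgm).const_mul c
  have haffine : ∫ u in Ioc a b, (klFun m + log m * (g u - m)) = (b - a) * klFun m := by
    rw [integral_add (integrable_const _) hgm, integral_const_mul,
      integral_sub hg (integrable_const _)]
    simp only [setIntegral_const, measureReal_def, Real.volume_Ioc, smul_eq_mul,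
      ENNReal.toReal_ofReal hd.le]
    rw [show (b - a) * m = I from mul_div_cancel₀ _ hd.ne', sub_self, mul_zero, add_zero]
  calc c * ((b - a) * klFun m)
      = ∫ u in Ioc a b, c * (klFun m + log m * (g u - m)) := by
        rw [integral_const_mul, haffine]
    _ ≤ ∫ u in Ioc a b, w u * klFun (g u) := integral_mono_ae htangent_int hwg htangent

lemma mul_log_div_exp_mul_le_mul_klFun {I d δ : ℝ} (hI : 0 < I) (hd : 0 < d) (hdδ : d ≤ δ) :
    I * log (I / (exp 1 * δ)) ≤ d * klFun (I / d) := by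
  have hδ : 0 < δ := hd.trans_le hdδ
  have hlog : log (I / (exp 1 * δ)) ≤ log (I / d) - 1 := by
    rw [div_mul_eq_div_div_swap, log_div (by positivity) (exp_pos 1).ne', log_exp]
    gcongr
  have hkl : d * klFun (I / d) = I * log (I / d) + d - I := by
    rw [klFun_apply]; field_simp
  nlinarith

section AbsolutelyContinuous

variable {x x' : ℝ → ℝ}

lemma continuousOn_Icc_of_eq_integral
    (hftc : ∀ s t : ℝ, 0 ≤ s → s ≤ t → x t - x s = ∫ u in s..t, x' u)
    {s u : ℝ} (hs : 0 ≤ s) (hsu : s ≤ u) (hint : IntervalIntegrable x' volume s u) :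
    ContinuousOn x (Icc s u) := by
  have hprim := intervalIntegral.continuousOn_primitive_interval (a := s) (b := u)
    (by rw [uIcc_of_le hsu]; exact (intervalIntegrable_iff_integrableOn_Icc_of_le hsu).1 hint)
  rw [uIcc_of_le hsu] at hprim
  refine (hprim.const_add (x s)).congr fun v hv => ?_
  simp only [← hftc s v hs hv.1, add_sub_cancel]

lemma ae_nonneg_of_eq_integral (hmono : MonotoneOn x (Ici 0))
    (hftc : ∀ s t : ℝ, 0 ≤ s → s ≤ t → x t - x s = ∫ u in s..t, x' u)
    {b : ℝ} (hb : 0 ≤ b) (hxb : x 0 < x b) :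
    ∀ᵐ u, u ∈ Ioi 0 → 0 ≤ x' u := by
  -- `x 0 < x b` rules out the junk value `0` of a non-integrable interval integral.
  have hN : ∀ N : ℕ, ∀ᵐ u, u ∈ Ioo 0 (b + N) → 0 ≤ x' u := by
    intro N
    have hbN : b ≤ b + N := le_add_of_nonneg_right N.cast_nonneg
    have hint : IntervalIntegrable x' volume 0 (b + N) := by
      refine intervalIntegral.intervalIntegrable_of_integral_ne_zero ?_
      rw [← hftc 0 _ le_rfl (hb.trans hbN)]
      linarith [hmono hb (hb.trans hbN) hbN]
    refine ae_nonneg_of_monotoneOn_primitive hint fun u hu v hv huv => ?_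
    simp only [← hftc 0 u le_rfl hu.1, ← hftc 0 v le_rfl hv.1]
    linarith [hmono hu.1 hv.1 huv]
  filter_upwards [ae_all_iff.2 hN] with u hu hu0
  obtain ⟨N, hN⟩ := exists_nat_gt (u - b)
  exact hu N ⟨hu0, by linarith⟩

lemma exists_mem_Ico_eq_add_half
    (hftc : ∀ s t : ℝ, 0 ≤ s → s ≤ t → x t - x s = ∫ u in s..t, x' u)
    {t b : ℝ} (ht : 0 ≤ t) (htb : t ≤ b) (hinc : x t < x b) :
    ∃ a ∈ Ico t b, x a = x t + (x b - x t) / 2 := by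
  have hint : IntervalIntegrable x' volume t b := by
    refine intervalIntegral.intervalIntegrable_of_integral_ne_zero ?_
    rw [← hftc t b ht htb]
    linarith
  obtain ⟨a, ha, hxa⟩ := intermediate_value_Icc htb
    (continuousOn_Icc_of_eq_integral hftc ht htb hint)
    (show x t + (x b - x t) / 2 ∈ Icc (x t) (x b) from ⟨by linarith, by linarith⟩)
  refine ⟨a, ⟨ha.1, ha.2.lt_of_ne ?_⟩, hxa⟩
  rintro rfl
  linarith

theorem half_increment_rpow_mul_log_le_integral {p δ t : ℝ} (hp : 0 ≤ p)
    (hmono : MonotoneOn x (Ici 0)) (hnn : ∀ t, 0 ≤ t → 0 ≤ x t)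
    (hftc : ∀ s t : ℝ, 0 ≤ s → s ≤ t → x t - x s = ∫ u in s..t, x' u)
    (hint : IntegrableOn (fun u => x u ^ p * klFun (x' u)) (Ioi 0))
    (hδ : 0 < δ) (ht : 0 ≤ t) (hinc : x t < x (t + δ)) :
    ((x (t + δ) - x t) / 2) ^ (p + 1) * log ((x (t + δ) - x t) / (2 * exp 1 * δ)) ≤
      ∫ u in Ioi 0, x u ^ p * klFun (x' u) := by
  set b := t + δ
  set ε := x b - x t
  have hε : 0 < ε / 2 := by simp only [ε]; linarith
  have hb : 0 ≤ b := by simp only [b]; linarith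
  have hx'_nonneg := ae_nonneg_of_eq_integral hmono hftc hb
    ((hmono self_mem_Ici ht ht).trans_lt hinc)
  obtain ⟨a, ⟨hta, hab⟩, hxa⟩ := exists_mem_Ico_eq_add_half hftc ht (by linarith) hinc
  have ha : 0 ≤ a := ht.trans hta
  have hIoc : Ioc a b ⊆ Ioi 0 := fun u hu => ha.trans_lt hu.1
  replace hxa : x a = x t + ε / 2 := hxa
  have hincrement : x b - x a = ε / 2 := by rw [hxa]; ring
  have hint' : IntegrableOn x' (Ioc a b) :=
    (intervalIntegral.intervalIntegrable_of_integral_ne_zero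
      (by rw [← hftc a b ha hab.le, hincrement]; exact hε.ne')).1
  have hI : ∫ u in Ioc a b, x' u = ε / 2 := by
    rw [← intervalIntegral.integral_of_le hab.le, ← hftc a b ha hab.le, hincrement]
  have hweight : ∀ u ∈ Ioc a b, (ε / 2) ^ p ≤ x u ^ p := fun u hu =>
    rpow_le_rpow hε.le (by linarith [hmono ha (ha.trans hu.1.le) hu.1.le, hnn t ht]) hp
  have hjensen := le_setIntegral_mul_klFun hab (by positivity) hweight
    (hx'_nonneg.mono fun u hu huI => hu (hIoc huI)) hint' (hI ▸ hε) (hint.mono_set hIoc)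
  have hrest : ∫ u in Ioc a b, x u ^ p * klFun (x' u) ≤ ∫ u in Ioi 0, x u ^ p * klFun (x' u) :=
    setIntegral_mono_set hint ((ae_restrict_iff' measurableSet_Ioi).2 (hx'_nonneg.mono
      fun u hu hu0 => mul_nonneg (rpow_nonneg (hnn u hu0.le) p) (klFun_nonneg (hu hu0))))
      hIoc.eventuallyLE
  rw [hI] at hjensen
  calc (ε / 2) ^ (p + 1) * log (ε / (2 * exp 1 * δ))
      = (ε / 2) ^ p * (ε / 2 * log (ε / 2 / (exp 1 * δ))) := by
        rw [rpow_add_one hε.ne', mul_assoc 2, ← div_div]; ring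
    _ ≤ (ε / 2) ^ p * ((b - a) * klFun (ε / 2 / (b - a))) :=
        mul_le_mul_of_nonneg_left (mul_log_div_exp_mul_le_mul_klFun hε (sub_pos.2 hab)
          (by simp only [b]; linarith)) (by positivity)
    _ ≤ _ := hjensen.trans hrest

end AbsolutelyContinuous

lemma le_two_mul_rpow_of_rpow_mul_log_le {α δ ε J : ℝ} (hα : α < 1) (hδ0 : 0 < δ) (hδ1 : δ < 1)
    (hε : 2 * exp 1 * δ ^ ((1:ℝ) / 2) < ε)
    (hJ : (ε / 2) ^ (1 / (1 - α)) * log (ε / (2 * exp 1 * δ)) ≤ J) :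
    ε ≤ 2 * (J / log (δ ^ (-(1:ℝ) / 2))) ^ (1 - α) := by
  set L := log (δ ^ (-(1:ℝ) / 2))
  have hε0 : 0 < ε := lt_trans (by positivity) hε
  have hL : 0 < L := by
    simp only [L, log_rpow hδ0]
    nlinarith [log_neg hδ0 hδ1]
  have hquot : δ ^ (-(1:ℝ) / 2) ≤ ε / (2 * exp 1 * δ) := by
    rw [le_div_iff₀ (by positivity)]
    calc δ ^ (-(1:ℝ) / 2) * (2 * exp 1 * δ) = 2 * exp 1 * δ ^ (-(1:ℝ) / 2 + 1) := by
          rw [rpow_add_one hδ0.ne']; ring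
      _ ≤ ε := by rw [show -(1:ℝ) / 2 + 1 = 1 / 2 by norm_num]; exact hε.le
  have hJL : (ε / 2) ^ (1 / (1 - α)) ≤ J / L := by
    rw [le_div_iff₀ hL]
    exact (mul_le_mul_of_nonneg_left (log_le_log (by positivity) hquot) (by positivity)).trans hJ
  have hhalf : ε / 2 ≤ (J / L) ^ (1 - α) :=
    calc ε / 2 = ((ε / 2) ^ (1 / (1 - α))) ^ (1 - α) := by
          rw [← rpow_mul (by positivity), one_div_mul_cancel (by linarith), rpow_one]
      _ ≤ (J / L) ^ (1 - α) := rpow_le_rpow (by positivity) hJL (by linarith)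
  linarith

theorem stmt17_general (α : ℝ) (hα0 : 0 ≤ α) (hα : α < 1)
    (x x' : ℝ → ℝ) (hmono : MonotoneOn x (Set.Ici 0))
    (hnn : ∀ t, 0 ≤ t → 0 ≤ x t)
    (hftc : ∀ s t : ℝ, 0 ≤ s → s ≤ t → x t - x s = ∫ u in s..t, x' u)
    (hint : IntegrableOn
      (fun t => x t ^ (α / (1 - α)) * (1 - x' t + x' t * Real.log (x' t))) (Set.Ioi 0))
    (J : ℝ)
    (hJ : J = ∫ t in Set.Ioi (0:ℝ),
      x t ^ (α / (1 - α)) * (1 - x' t + x' t * Real.log (x' t)))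
    (δ t : ℝ) (hδ0 : 0 < δ) (hδ1 : δ < 1) (ht : 0 ≤ t) :
    (2 * Real.exp 1 * δ ^ ((1:ℝ)/2) ≤ x (t + δ) - x t →
      ((x (t + δ) - x t) / 2) ^ (1 / (1 - α)) *
          Real.log ((x (t + δ) - x t) / (2 * Real.exp 1 * δ)) ≤ J) ∧
    x (t + δ) - x t ≤
      max (2 * (J / Real.log (δ ^ (-(1:ℝ)/2))) ^ (1 - α))
        (2 * Real.exp 1 * δ ^ ((1:ℝ)/2)) := by
  have hklFun : ∀ s, 1 - s + s * log s = klFun s := fun s => by rw [klFun_apply]; ring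
  simp only [hklFun] at hint hJ
  have hexponent : α / (1 - α) + 1 = 1 / (1 - α) := by
    rw [div_add_one (sub_pos.2 hα).ne', add_sub_cancel]
  have lower : 2 * exp 1 * δ ^ ((1:ℝ) / 2) ≤ x (t + δ) - x t →
      ((x (t + δ) - x t) / 2) ^ (1 / (1 - α)) *
        log ((x (t + δ) - x t) / (2 * exp 1 * δ)) ≤ J := fun h => by
    rw [hJ, ← hexponent]
    refine half_increment_rpow_mul_log_le_integral (div_nonneg hα0 (by linarith)) hmono hnn hftc
      hint hδ0 ht ?_
    linarith [(by positivity : 0 < 2 * exp 1 * δ ^ ((1:ℝ) / 2))]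
  refine ⟨lower, ?_⟩
  rcases le_or_gt (x (t + δ) - x t) (2 * exp 1 * δ ^ ((1:ℝ) / 2)) with hsmall | hlarge
  · exact le_max_of_le_right hsmall
  · exact le_max_of_le_left
      (le_two_mul_rpow_of_rpow_mul_log_le hα hδ0 hδ1 hlarge (lower hlarge.le))

/-- Modulus-of-continuity estimate for the large deviation rate function `J`. -/
theorem stmt17 (α : ℝ) (hα0 : 0 ≤ α) (hα : α < 1)
    (x x' : ℝ → ℝ) (hmono : MonotoneOn x (Set.Ici 0)) (hx0 : x 0 = 0)
    (hnn : ∀ t, 0 ≤ t → 0 ≤ x t)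
    (hftc : ∀ s t : ℝ, 0 ≤ s → s ≤ t → x t - x s = ∫ u in s..t, x' u)
    (hint : IntegrableOn
      (fun t => x t ^ (α / (1 - α)) * (1 - x' t + x' t * Real.log (x' t))) (Set.Ioi 0))
    (J : ℝ)
    (hJ : J = ∫ t in Set.Ioi (0:ℝ),
      x t ^ (α / (1 - α)) * (1 - x' t + x' t * Real.log (x' t)))
    (δ t : ℝ) (hδ0 : 0 < δ) (hδ1 : δ < 1) (ht : 0 ≤ t) :
    (2 * Real.exp 1 * δ ^ ((1:ℝ)/2) ≤ x (t + δ) - x t →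
      ((x (t + δ) - x t) / 2) ^ (1 / (1 - α)) *
          Real.log ((x (t + δ) - x t) / (2 * Real.exp 1 * δ)) ≤ J) ∧
    x (t + δ) - x t ≤
      max (2 * (J / Real.log (δ ^ (-(1:ℝ)/2))) ^ (1 - α))
        (2 * Real.exp 1 * δ ^ ((1:ℝ)/2)) :=
  stmt17_general α hα0 hα x x' hmono hnn hftc hint J hJ δ t hδ0 hδ1 ht
end
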